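/- Let ẽ, d̃, f̃, ã, b̃, c̃ be the bijections of ℤ³ defined by ẽ(i,j,k) = (i+1,j,k), d̃(i,j,k) = (i,j+1,k), f̃(i,j,k) = (i,j,k−ij), ã(i,j,k) = (i,j,k−j), b̃(i,j,k) = (i,j,k+i), c̃(i,j,k) = (i,j,k+1). Then the group of bijections of ℤ³ generated by ẽ, d̃, f̃, ã, b̃, c̃ is isomorphic to N₄, via an isomorphism sending e ↦ ẽ, d ↦ d̃, f ↦ f̃, a ↦ ã, b ↦ b̃, c ↦ c̃. -/

import Mathlib

/-- A 4×4 integer matrix is lower unitriangular if it has `1`s on the diagonal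
and `0`s above the diagonal. -/
def IsUnitriLower (M : Matrix (Fin 4) (Fin 4) ℤ) : Prop :=
  (∀ i, M i i = 1) ∧ ∀ i j : Fin 4, i < j → M i j = 0

/-- `N₄`: the group of 4×4 lower triangular integer matrices with `1`s on the diagonal,
realized as a subgroup of the units of the matrix ring. -/
def N4 : Subgroup (Matrix (Fin 4) (Fin 4) ℤ)ˣ where
  carrier := {u | IsUnitriLower u.val}
  one_mem' := by
    refine ⟨fun i => ?_, fun i j hij => ?_⟩
    · simp [Matrix.one_apply_eq]
    · simp [Units.val_one, Matrix.one_apply_ne (ne_of_lt hij)]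
  mul_mem' := by
    rintro a b ⟨ha1, ha2⟩ ⟨hb1, hb2⟩
    refine ⟨fun i => ?_, fun i j hij => ?_⟩
    · have key : ∀ k : Fin 4, a.val i k * b.val k i = if k = i then 1 else 0 := by
        intro k
        rcases lt_trichotomy k i with h | h | h
        · rw [hb2 k i h, mul_zero, if_neg h.ne]
        · subst h
          rw [ha1, hb1, one_mul, if_pos rfl]
        · rw [ha2 i k h, zero_mul, if_neg h.ne']
      show (a.val * b.val) i i = 1
      rw [Matrix.mul_apply]
      simp [key]
    · show (a.val * b.val) i j = 0
      rw [Matrix.mul_apply]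
      refine Finset.sum_eq_zero fun k _ => ?_
      rcases lt_or_ge i k with h | h
      · rw [ha2 i k h, zero_mul]
      · rw [hb2 k j (lt_of_le_of_lt h hij), mul_zero]
  inv_mem' := by
    rintro x ⟨ha1, ha2⟩
    set A := x.val with hA
    set B := (x⁻¹).val with hB
    have hBA : B * A = 1 := by
      rw [hB, hA, ← Units.val_mul]
      simp
    have key : ∀ i j : Fin 4,
        B i 0 * A 0 j + B i 1 * A 1 j + B i 2 * A 2 j + B i 3 * A 3 j
          = if i = j then 1 else 0 := by
      intro i j
      have h : (B * A) i j = (1 : Matrix (Fin 4) (Fin 4) ℤ) i j := by rw [hBA]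
      rw [Matrix.mul_apply, Fin.sum_univ_four] at h
      rw [h, Matrix.one_apply]
    have b03 : B 0 3 = 0 := by
      have h := key 0 3
      rw [ha2 0 3 (by decide), ha2 1 3 (by decide), ha2 2 3 (by decide), ha1 3,
        if_neg (by decide)] at h
      simpa using h
    have b13 : B 1 3 = 0 := by
      have h := key 1 3
      rw [ha2 0 3 (by decide), ha2 1 3 (by decide), ha2 2 3 (by decide), ha1 3,
        if_neg (by decide)] at h
      simpa using h
    have b23 : B 2 3 = 0 := by
      have h := key 2 3
      rw [ha2 0 3 (by decide), ha2 1 3 (by decide), ha2 2 3 (by decide), ha1 3,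
        if_neg (by decide)] at h
      simpa using h
    have b33 : B 3 3 = 1 := by
      have h := key 3 3
      rw [ha2 0 3 (by decide), ha2 1 3 (by decide), ha2 2 3 (by decide), ha1 3,
        if_pos rfl] at h
      simpa using h
    have b02 : B 0 2 = 0 := by
      have h := key 0 2
      rw [ha2 0 2 (by decide), ha2 1 2 (by decide), ha1 2, b03, if_neg (by decide)] at h
      simpa using h
    have b12 : B 1 2 = 0 := by
      have h := key 1 2
      rw [ha2 0 2 (by decide), ha2 1 2 (by decide), ha1 2, b13, if_neg (by decide)] at h
      simpa using h
    have b22 : B 2 2 = 1 := by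
      have h := key 2 2
      rw [ha2 0 2 (by decide), ha2 1 2 (by decide), ha1 2, b23, if_pos rfl] at h
      simpa using h
    have b01 : B 0 1 = 0 := by
      have h := key 0 1
      rw [ha2 0 1 (by decide), ha1 1, b02, b03, if_neg (by decide)] at h
      simpa using h
    have b11 : B 1 1 = 1 := by
      have h := key 1 1
      rw [ha2 0 1 (by decide), ha1 1, b12, b13, if_pos rfl] at h
      simpa using h
    have b00 : B 0 0 = 1 := by
      have h := key 0 0
      rw [ha1 0, b01, b02, b03, if_pos rfl] at h
      simpa using h
    refine ⟨fun i => ?_, fun i j hij => ?_⟩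
    · fin_cases i
      · exact b00
      · exact b11
      · exact b22
      · exact b33
    · fin_cases i <;> fin_cases j <;>
        first
          | exact absurd hij (by decide)
          | exact b01
          | exact b02
          | exact b03
          | exact b12
          | exact b13
          | exact b23

/-- Helper to build elements of `N4` from a matrix, an explicit inverse, and proofs. -/
def mkN4 (M N : Matrix (Fin 4) (Fin 4) ℤ) (h1 : M * N = 1) (h2 : N * M = 1)
    (h : IsUnitriLower M) : N4 :=
  ⟨⟨M, N, h1, h2⟩, h⟩

/-- The generator `e` of `N₄`: entry `1` in position (2,1). -/
def e4 : N4 :=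
  mkN4 !![1,0,0,0; 1,1,0,0; 0,0,1,0; 0,0,0,1] !![1,0,0,0; -1,1,0,0; 0,0,1,0; 0,0,0,1]
    (by decide) (by decide) (by constructor <;> simp [Fin.forall_fin_succ])

/-- The generator `f` of `N₄`: entry `1` in position (3,2). -/
def f4 : N4 :=
  mkN4 !![1,0,0,0; 0,1,0,0; 0,1,1,0; 0,0,0,1] !![1,0,0,0; 0,1,0,0; 0,-1,1,0; 0,0,0,1]
    (by decide) (by decide) (by constructor <;> simp [Fin.forall_fin_succ])

/-- The generator `d` of `N₄`: entry `1` in position (4,3). -/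
def d4 : N4 :=
  mkN4 !![1,0,0,0; 0,1,0,0; 0,0,1,0; 0,0,1,1] !![1,0,0,0; 0,1,0,0; 0,0,1,0; 0,0,-1,1]
    (by decide) (by decide) (by constructor <;> simp [Fin.forall_fin_succ])

/-- The generator `a` of `N₄`: entry `1` in position (3,1). -/
def a4 : N4 :=
  mkN4 !![1,0,0,0; 0,1,0,0; 1,0,1,0; 0,0,0,1] !![1,0,0,0; 0,1,0,0; -1,0,1,0; 0,0,0,1]
    (by decide) (by decide) (by constructor <;> simp [Fin.forall_fin_succ])

/-- The generator `b` of `N₄`: entry `1` in position (4,2). -/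
def b4 : N4 :=
  mkN4 !![1,0,0,0; 0,1,0,0; 0,0,1,0; 0,1,0,1] !![1,0,0,0; 0,1,0,0; 0,0,1,0; 0,-1,0,1]
    (by decide) (by decide) (by constructor <;> simp [Fin.forall_fin_succ])

/-- The generator `c` of `N₄`: entry `1` in position (4,1). -/
def c4 : N4 :=
  mkN4 !![1,0,0,0; 0,1,0,0; 0,0,1,0; 1,0,0,1] !![1,0,0,0; 0,1,0,0; 0,0,1,0; -1,0,0,1]
    (by decide) (by decide) (by constructor <;> simp [Fin.forall_fin_succ])

/-- `ẽ : (i,j,k) ↦ (i+1,j,k)`. -/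
def te : Equiv.Perm (ℤ × ℤ × ℤ) where
  toFun p := (p.1 + 1, p.2.1, p.2.2)
  invFun p := (p.1 - 1, p.2.1, p.2.2)
  left_inv := fun ⟨i, j, k⟩ => by simp
  right_inv := fun ⟨i, j, k⟩ => by simp

/-- `d̃ : (i,j,k) ↦ (i,j+1,k)`. -/
def td : Equiv.Perm (ℤ × ℤ × ℤ) where
  toFun p := (p.1, p.2.1 + 1, p.2.2)
  invFun p := (p.1, p.2.1 - 1, p.2.2)
  left_inv := fun ⟨i, j, k⟩ => by simp
  right_inv := fun ⟨i, j, k⟩ => by simp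

/-- `f̃ : (i,j,k) ↦ (i,j,k−ij)`. -/
def tf : Equiv.Perm (ℤ × ℤ × ℤ) where
  toFun p := (p.1, p.2.1, p.2.2 - p.1 * p.2.1)
  invFun p := (p.1, p.2.1, p.2.2 + p.1 * p.2.1)
  left_inv := fun ⟨i, j, k⟩ => by simp
  right_inv := fun ⟨i, j, k⟩ => by simp

/-- `ã : (i,j,k) ↦ (i,j,k−j)`. -/
def ta : Equiv.Perm (ℤ × ℤ × ℤ) where
  toFun p := (p.1, p.2.1, p.2.2 - p.2.1)
  invFun p := (p.1, p.2.1, p.2.2 + p.2.1)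
  left_inv := fun ⟨i, j, k⟩ => by simp
  right_inv := fun ⟨i, j, k⟩ => by simp

/-- `b̃ : (i,j,k) ↦ (i,j,k+i)`. -/
def tb : Equiv.Perm (ℤ × ℤ × ℤ) where
  toFun p := (p.1, p.2.1, p.2.2 + p.1)
  invFun p := (p.1, p.2.1, p.2.2 - p.1)
  left_inv := fun ⟨i, j, k⟩ => by simp
  right_inv := fun ⟨i, j, k⟩ => by simp

/-- `c̃ : (i,j,k) ↦ (i,j,k+1)`. -/
def tc : Equiv.Perm (ℤ × ℤ × ℤ) where
  toFun p := (p.1, p.2.1, p.2.2 + 1)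
  invFun p := (p.1, p.2.1, p.2.2 - 1)
  left_inv := fun ⟨i, j, k⟩ => by simp
  right_inv := fun ⟨i, j, k⟩ => by simp

/-!
Every matrix of `N₄` has a normal form `e^{m₁₀} f^{m₂₁} a^{m₂₀} b^{m₃₁} c^{m₃₀} d^{m₃₂}`, and
the corresponding word in `ẽ, f̃, ã, b̃, c̃, d̃` is a shear of `ℤ³`,
`(i,j,k) ↦ (i + p, j + q, k + r + α i + β j + γ i j)`. Shears compose the way unitriangular
matrices multiply, so sending `M` to this shear is a homomorphism. It is injective because the
parameters of a shear can be read off its values at four points, and its image is generated by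
`ẽ, …, c̃` because every shear is a product of their powers.
-/

lemma eq_zpow_of_map_add {G : Type*} [Group G] {g : ℤ → G}
    (hg : ∀ m n, g (m + n) = g m * g n) (n : ℤ) : g n = g 1 ^ n := by
  have hg0 : g 0 = 1 := by simpa using hg 0 0
  let f : Multiplicative ℤ →* G := ⟨⟨g ∘ Multiplicative.toAdd, hg0⟩, hg⟩
  exact MonoidHom.apply_mint G f (.ofAdd n)

def shearPerm (p q α β γ r : ℤ) : Equiv.Perm (ℤ × ℤ × ℤ) where
  toFun x := (x.1 + p, x.2.1 + q, x.2.2 + r + α * x.1 + β * x.2.1 + γ * x.1 * x.2.1)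
  invFun x := (x.1 - p, x.2.1 - q,
    x.2.2 - r - α * (x.1 - p) - β * (x.2.1 - q) - γ * (x.1 - p) * (x.2.1 - q))
  left_inv := fun ⟨i, j, k⟩ => by simp only [Prod.mk.injEq]; refine ⟨?_, ?_, ?_⟩ <;> ring
  right_inv := fun ⟨i, j, k⟩ => by simp only [Prod.mk.injEq]; refine ⟨?_, ?_, ?_⟩ <;> ring

@[simp]
lemma shearPerm_apply (p q α β γ r i j k : ℤ) :
    shearPerm p q α β γ r (i, j, k) = (i + p, j + q, k + r + α * i + β * j + γ * i * j) :=
  rfl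

lemma shearPerm_mul (p q α β γ r p' q' α' β' γ' r' : ℤ) :
    shearPerm p q α β γ r * shearPerm p' q' α' β' γ' r' =
      shearPerm (p + p') (q + q') (α + α' + γ * q') (β + β' + γ * p') (γ + γ')
        (r + r' + α * p' + β * q' + γ * p' * q') := by
  ext ⟨i, j, k⟩ <;> simp only [Equiv.Perm.coe_mul, Function.comp_apply, shearPerm_apply] <;> ring

lemma shearPerm_inj {p q α β γ r p' q' α' β' γ' r' : ℤ} :
    shearPerm p q α β γ r = shearPerm p' q' α' β' γ' r' ↔
      p = p' ∧ q = q' ∧ α = α' ∧ β = β' ∧ γ = γ' ∧ r = r' := by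
  refine ⟨fun h => ?_, by rintro ⟨rfl, rfl, rfl, rfl, rfl, rfl⟩; rfl⟩
  have at_point (i j : ℤ) := congrArg (· (i, j, 0)) h
  simp only [shearPerm_apply, Prod.mk.injEq] at at_point
  obtain ⟨hp, hq, hr⟩ := at_point 0 0
  obtain ⟨-, -, hα⟩ := at_point 1 0
  obtain ⟨-, -, hβ⟩ := at_point 0 1
  obtain ⟨-, -, hγ⟩ := at_point 1 1
  refine ⟨?_, ?_, ?_, ?_, ?_, ?_⟩ <;> linarith

lemma shearPerm_te : shearPerm 1 0 0 0 0 0 = te := by ext ⟨i, j, k⟩ <;> simp [te]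
lemma shearPerm_td : shearPerm 0 1 0 0 0 0 = td := by ext ⟨i, j, k⟩ <;> simp [td]
lemma shearPerm_tf : shearPerm 0 0 0 0 (-1) 0 = tf := by ext ⟨i, j, k⟩ <;> simp [tf]; ring
lemma shearPerm_ta : shearPerm 0 0 0 (-1) 0 0 = ta := by ext ⟨i, j, k⟩ <;> simp [ta]; ring
lemma shearPerm_tb : shearPerm 0 0 1 0 0 0 = tb := by ext ⟨i, j, k⟩ <;> simp [tb]
lemma shearPerm_tc : shearPerm 0 0 0 0 0 1 = tc := by ext ⟨i, j, k⟩ <;> simp [tc]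

lemma te_zpow (n : ℤ) : te ^ n = shearPerm n 0 0 0 0 0 := by
  rw [← shearPerm_te]
  exact (eq_zpow_of_map_add (g := (shearPerm · 0 0 0 0 0)) (by simp [shearPerm_mul]) n).symm

lemma td_zpow (n : ℤ) : td ^ n = shearPerm 0 n 0 0 0 0 := by
  rw [← shearPerm_td]
  exact (eq_zpow_of_map_add (g := (shearPerm 0 · 0 0 0 0)) (by simp [shearPerm_mul]) n).symm

lemma tf_zpow (n : ℤ) : tf ^ n = shearPerm 0 0 0 0 (-n) 0 := by
  rw [← shearPerm_tf]
  exact (eq_zpow_of_map_add (g := fun n => shearPerm 0 0 0 0 (-n) 0)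
    (by simp [shearPerm_mul, add_comm]) n).symm

lemma ta_zpow (n : ℤ) : ta ^ n = shearPerm 0 0 0 (-n) 0 0 := by
  rw [← shearPerm_ta]
  exact (eq_zpow_of_map_add (g := fun n => shearPerm 0 0 0 (-n) 0 0)
    (by simp [shearPerm_mul, add_comm]) n).symm

lemma tb_zpow (n : ℤ) : tb ^ n = shearPerm 0 0 n 0 0 0 := by
  rw [← shearPerm_tb]
  exact (eq_zpow_of_map_add (g := (shearPerm 0 0 · 0 0 0)) (by simp [shearPerm_mul]) n).symm

lemma tc_zpow (n : ℤ) : tc ^ n = shearPerm 0 0 0 0 0 n := by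
  rw [← shearPerm_tc]
  exact (eq_zpow_of_map_add (g := (shearPerm 0 0 0 0 0 ·)) (by simp [shearPerm_mul]) n).symm

lemma shearPerm_eq_zpow_prod (p q α β γ r : ℤ) :
    shearPerm p q α β γ r = te ^ p * td ^ q * tc ^ r * tb ^ α * ta ^ (-β) * tf ^ (-γ) := by
  simp only [te_zpow, td_zpow, tc_zpow, tb_zpow, ta_zpow, tf_zpow, neg_neg, shearPerm_mul]
  congr 1 <;> ring

lemma shearPerm_mem_closure (p q α β γ r : ℤ) :
    shearPerm p q α β γ r ∈ Subgroup.closure {te, td, tf, ta, tb, tc} := by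
  have mem {t} (ht : t ∈ ({te, td, tf, ta, tb, tc} : Set (Equiv.Perm (ℤ × ℤ × ℤ)))) (n : ℤ) :
      t ^ n ∈ Subgroup.closure {te, td, tf, ta, tb, tc} :=
    zpow_mem (Subgroup.subset_closure ht) n
  rw [shearPerm_eq_zpow_prod]
  refine mul_mem (mul_mem (mul_mem (mul_mem (mul_mem ?_ ?_) ?_) ?_) ?_) ?_ <;> apply mem <;> simp

lemma IsUnitriLower.mul_entries {A B : Matrix (Fin 4) (Fin 4) ℤ}
    (hA : IsUnitriLower A) (hB : IsUnitriLower B) :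
    (A * B) 1 0 = A 1 0 + B 1 0 ∧
    (A * B) 2 1 = A 2 1 + B 2 1 ∧
    (A * B) 3 2 = A 3 2 + B 3 2 ∧
    (A * B) 2 0 = A 2 0 + B 2 0 + A 2 1 * B 1 0 ∧
    (A * B) 3 1 = A 3 1 + B 3 1 + A 3 2 * B 2 1 ∧
    (A * B) 3 0 = A 3 0 + B 3 0 + A 3 1 * B 1 0 + A 3 2 * B 2 0 := by
  obtain ⟨hA1, hA2⟩ := hA
  obtain ⟨hB1, hB2⟩ := hB
  refine ⟨?_, ?_, ?_, ?_, ?_, ?_⟩ <;>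
    simp [Matrix.mul_apply, Fin.sum_univ_four, hA1, hB1, hA2, hB2] <;> ring

lemma IsUnitriLower.ext {A B : Matrix (Fin 4) (Fin 4) ℤ}
    (hA : IsUnitriLower A) (hB : IsUnitriLower B)
    (h10 : A 1 0 = B 1 0) (h21 : A 2 1 = B 2 1) (h32 : A 3 2 = B 3 2)
    (h20 : A 2 0 = B 2 0) (h31 : A 3 1 = B 3 1) (h30 : A 3 0 = B 3 0) : A = B := by
  ext i j
  rcases lt_trichotomy i j with hij | rfl | hji
  · rw [hA.2 i j hij, hB.2 i j hij]
  · rw [hA.1, hB.1]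
  · fin_cases i <;> fin_cases j <;> first | assumption | exact absurd hji (by decide)

namespace N4

/-- The image of the normal form of `M` under `e ↦ ẽ, …`; the products of entries appear because
`d̃^{m₃₂}` shifts `j` before `ã^{m₂₀}` and `f̃^{m₂₁}` act. -/
def toShearFun (M : N4) : Equiv.Perm (ℤ × ℤ × ℤ) :=
  shearPerm (M.1.1 1 0) (M.1.1 3 2) (M.1.1 3 1 - M.1.1 3 2 * M.1.1 2 1)
    (-M.1.1 2 0) (-M.1.1 2 1) (M.1.1 3 0 - M.1.1 3 2 * M.1.1 2 0)

def toShear : N4 →* Equiv.Perm (ℤ × ℤ × ℤ) :=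
  MonoidHom.mk' toShearFun fun x y => by
    obtain ⟨h10, h21, h32, h20, h31, h30⟩ := x.2.mul_entries y.2
    simp only [toShearFun, shearPerm_mul, Subgroup.coe_mul, Units.val_mul, h10, h21, h32,
      h20, h31, h30]
    congr 1 <;> ring

lemma toShear_injective : Function.Injective toShear := by
  intro x y h
  obtain ⟨h10, h32, h31, h20, h21, h30⟩ := shearPerm_inj.1 h
  rw [neg_inj] at h20 h21
  rw [h32, h21, sub_left_inj] at h31
  rw [h32, h20, sub_left_inj] at h30
  exact Subtype.ext (Units.ext (x.2.ext y.2 h10 h21 h32 h20 h31 h30))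

lemma toShear_e4 : toShear e4 = te := shearPerm_te
lemma toShear_d4 : toShear d4 = td := shearPerm_td
lemma toShear_f4 : toShear f4 = tf := shearPerm_tf
lemma toShear_a4 : toShear a4 = ta := shearPerm_ta
lemma toShear_b4 : toShear b4 = tb := shearPerm_tb
lemma toShear_c4 : toShear c4 = tc := shearPerm_tc

lemma range_toShear : toShear.range = Subgroup.closure {te, td, tf, ta, tb, tc} := by
  apply le_antisymm
  · rintro _ ⟨M, rfl⟩
    exact shearPerm_mem_closure _ _ _ _ _ _
  · rw [Subgroup.closure_le]
    rintro _ (rfl | rfl | rfl | rfl | rfl | rfl)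
    exacts [⟨e4, toShear_e4⟩, ⟨d4, toShear_d4⟩, ⟨f4, toShear_f4⟩,
      ⟨a4, toShear_a4⟩, ⟨b4, toShear_b4⟩, ⟨c4, toShear_c4⟩]

end N4

/-- **Proposition 1.3.** The group of bijections of `ℤ³` generated by
`ẽ, d̃, f̃, ã, b̃, c̃` is isomorphic to `N₄`, via an isomorphism sending the standard
generators `e, d, f, a, b, c` of `N₄` to `ẽ, d̃, f̃, ã, b̃, c̃` respectively. -/
theorem N4_iso_perm_group_Z3 :
    ∃ ψ : N4 ≃* (Subgroup.closure {te, td, tf, ta, tb, tc} : Subgroup (Equiv.Perm (ℤ × ℤ × ℤ))),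
      (ψ e4 : Equiv.Perm (ℤ × ℤ × ℤ)) = te ∧
      (ψ d4 : Equiv.Perm (ℤ × ℤ × ℤ)) = td ∧
      (ψ f4 : Equiv.Perm (ℤ × ℤ × ℤ)) = tf ∧
      (ψ a4 : Equiv.Perm (ℤ × ℤ × ℤ)) = ta ∧
      (ψ b4 : Equiv.Perm (ℤ × ℤ × ℤ)) = tb ∧
      (ψ c4 : Equiv.Perm (ℤ × ℤ × ℤ)) = tc :=
  ⟨(MonoidHom.ofInjective N4.toShear_injective).trans
      (MulEquiv.subgroupCongr N4.range_toShear),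
    N4.toShear_e4, N4.toShear_d4, N4.toShear_f4, N4.toShear_a4, N4.toShear_b4, N4.toShear_c4⟩
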